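/- If there exists an unsatisfiable (k,s)-CNF formula, then there exists a (k,s)-hypergraph, i.e. a k-uniform hypergraph with maximum degree at most s on which Maker has a winning pairing strategy. -/

import Mathlib

open Finset

/-- A (finite) hypergraph: a vertex set and a family of hyperedges. -/
structure FinHypergraph (α : Type*) where
  V : Finset α
  E : Finset (Finset α)

namespace FinHypergraph

variable {α : Type*} [DecidableEq α]

/-- `H` is an `n`-uniform hypergraph: every hyperedge is an `n`-element subset of `V`. -/
def IsUniform (H : FinHypergraph α) (n : ℕ) : Prop :=
  (∀ e ∈ H.E, e ⊆ H.V) ∧ (∀ e ∈ H.E, e.card = n)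

/-- The degree of a vertex: the number of hyperedges containing it. -/
def degree (H : FinHypergraph α) (v : α) : ℕ :=
  (H.E.filter fun e => v ∈ e).card

/-- The neighborhood size of a hyperedge `e`: the number of hyperedges `e' ≠ e`
meeting `e`. -/
def nbhdSize (H : FinHypergraph α) (e : Finset α) : ℕ :=
  (H.E.filter fun e' => e' ≠ e ∧ (e' ∩ e).Nonempty).card

/-- Maker has a winning pairing strategy on `H`: there are a first vertex `v₀ ∈ V` and
pairwise disjoint pairs from `V \ {v₀}` covering all but at most one vertex of `V \ {v₀}`,
such that any set consisting of `v₀` together with exactly one vertex from each pair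
contains a hyperedge. -/
def MakerPairingWin (H : FinHypergraph α) : Prop :=
  ∃ v₀ ∈ H.V, ∃ P : Finset (Finset α),
    (∀ p ∈ P, p.card = 2 ∧ p ⊆ H.V.erase v₀) ∧
    (∀ p ∈ P, ∀ q ∈ P, p ≠ q → Disjoint p q) ∧
    ((H.V.erase v₀) \ P.sup id).card ≤ 1 ∧
    (∀ S : Finset α, S ⊆ P.sup id → (∀ p ∈ P, (S ∩ p).card = 1) →
      ∃ e ∈ H.E, e ⊆ insert v₀ S)

/-- Maker has a winning *pure* pairing strategy on `H`: there are pairwise disjoint pairs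
of vertices covering all but at most one vertex of `V`, such that any set consisting of
exactly one vertex from each pair contains a hyperedge. -/
def MakerPurePairingWin (H : FinHypergraph α) : Prop :=
  ∃ P : Finset (Finset α),
    (∀ p ∈ P, p.card = 2 ∧ p ⊆ H.V) ∧
    (∀ p ∈ P, ∀ q ∈ P, p ≠ q → Disjoint p q) ∧
    (H.V \ P.sup id).card ≤ 1 ∧
    (∀ S : Finset α, S ⊆ P.sup id → (∀ p ∈ P, (S ∩ p).card = 1) →
      ∃ e ∈ H.E, e ⊆ S)

end FinHypergraph

/-- A literal: a variable (a natural number) together with a polarity. -/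
abbrev Lit : Type := ℕ × Bool

/-- A clause: a finite set of literals. -/
abbrev Clause : Type := Finset Lit

/-- A CNF formula: a finite set of clauses. -/
abbrev CnfFormula : Type := Finset Clause

/-- The literals of a clause are over pairwise distinct variables. -/
def distinctVars (C : Clause) : Prop :=
  ∀ l ∈ C, ∀ l' ∈ C, l.1 = l'.1 → l = l'

/-- A CNF formula is satisfiable if some assignment makes a literal of every clause true. -/
def CnfSatisfiable (F : CnfFormula) : Prop :=
  ∃ σ : ℕ → Bool, ∀ C ∈ F, ∃ l ∈ C, σ l.1 = l.2

/-- The number of clauses of `F` in which the variable `x` occurs (in either polarity). -/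
def varOcc (F : CnfFormula) (x : ℕ) : ℕ :=
  (F.filter fun C => ∃ b : Bool, (x, b) ∈ C).card

/-- The number of clauses of `F` in which the literal `l` occurs. -/
def litOcc (F : CnfFormula) (l : Lit) : ℕ :=
  (F.filter fun C => l ∈ C).card

/-- `F` is a `k`-CNF formula: every clause has exactly `k` literals over distinct variables. -/
def isKCNF (F : CnfFormula) (k : ℕ) : Prop :=
  ∀ C ∈ F, C.card = k ∧ distinctVars C

/-- The number of clauses of `F` distinct from `C` sharing a variable with `C`. -/
def clauseNbhd (F : CnfFormula) (C : Clause) : ℕ :=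
  (F.filter fun D => D ≠ C ∧ ∃ l ∈ C, ∃ b : Bool, (l.1, b) ∈ D).card

/-- The number of distinct variables of `F`. -/
def numVarsCnf (F : CnfFormula) : ℕ := (F.sup fun C => C.image Prod.fst).card

/-- `F` is minimal unsatisfiable. -/
def MinimalUnsat (F : CnfFormula) : Prop :=
  ¬ CnfSatisfiable F ∧ ∀ C ∈ F, CnfSatisfiable (F.erase C)

/-- `F` belongs to MU(1): minimal unsatisfiable with (#clauses) − (#variables) = 1. -/
def MU1 (F : CnfFormula) : Prop :=
  MinimalUnsat F ∧ F.card = numVarsCnf F + 1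

/-!
Take the literals over the variables of `F` as vertices and the clauses of `F` as hyperedges:
uniformity and degrees are inherited from `F`. Maker opens with the positive literal of some
variable `x₀` and pairs every other variable with its negation. Whichever literal of each pair
Maker gets, the assignment making exactly Maker's literals false falsifies some clause of the
unsatisfiable `F`, and all literals of that clause are then Maker's.
-/

theorem Finset.sup_map_mapEmbedding_id {α β : Type*} [DecidableEq α] [DecidableEq β] (f : α ↪ β)
    (P : Finset (Finset α)) :
    (P.map (mapEmbedding f).toEmbedding).sup id = (P.sup id).map f := by
  ext b
  simp only [mem_sup, mem_map, id]
  aesop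

namespace FinHypergraph

variable {α β : Type*}

def map (f : α ↪ β) (H : FinHypergraph α) : FinHypergraph β :=
  ⟨H.V.map f, H.E.map (mapEmbedding f).toEmbedding⟩

theorem IsUniform.map {H : FinHypergraph α} {n : ℕ} (h : H.IsUniform n) (f : α ↪ β) :
    (H.map f).IsUniform n := by
  refine ⟨fun e' he' => ?_, fun e' he' => ?_⟩ <;>
    obtain ⟨e, he, rfl⟩ := mem_map.1 he'
  · exact map_subset_map.2 (h.1 e he)
  · simpa using h.2 e he

variable [DecidableEq α] [DecidableEq β]

theorem degree_map (f : α ↪ β) (H : FinHypergraph α) (v : α) :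
    (H.map f).degree (f v) = H.degree v := by
  simp only [degree, map, filter_map, card_map]
  congr 2
  ext e
  simp

theorem MakerPairingWin.map {H : FinHypergraph α} (h : H.MakerPairingWin) (f : α ↪ β) :
    (H.map f).MakerPairingWin := by
  obtain ⟨v₀, hv₀, P, hpair, hdisj, hcover, hwin⟩ := h
  have hsup := sup_map_mapEmbedding_id f P
  refine ⟨f v₀, mem_map_of_mem f hv₀, P.map (mapEmbedding f).toEmbedding,
    fun p hp => ?_, fun p hp q hq hpq => ?_, ?_, fun S hS hone => ?_⟩
  · obtain ⟨p, hp', rfl⟩ := mem_map.1 hp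
    simpa [FinHypergraph.map, ← map_erase] using hpair p hp'
  · obtain ⟨p, hp', rfl⟩ := mem_map.1 hp
    obtain ⟨q, hq', rfl⟩ := mem_map.1 hq
    exact (disjoint_map f).2 (hdisj p hp' q hq' fun h => hpq (h ▸ rfl))
  · simpa [FinHypergraph.map, hsup, ← map_erase, ← Finset.map_sdiff] using hcover
  · obtain ⟨T, hT, rfl⟩ := subset_map_iff.1 (hsup ▸ hS)
    have hTone : ∀ p ∈ P, (T ∩ p).card = 1 := fun p hp => by
      simpa [← map_inter] using hone _ (mem_map_of_mem _ hp)
    obtain ⟨e, he, hsub⟩ := hwin T hT hTone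
    exact ⟨e.map f, mem_map_of_mem _ he, by simpa [← map_insert] using hsub⟩

end FinHypergraph

def cnfHypergraph (F : CnfFormula) (X : Finset ℕ) : FinHypergraph Lit :=
  ⟨X ×ˢ univ, F⟩

theorem litOcc_le_varOcc (F : CnfFormula) (l : Lit) : litOcc F l ≤ varOcc F l.1 :=
  card_le_card (monotone_filter_right _ fun _ _ hl => ⟨l.2, hl⟩)

theorem cnfHypergraph_degree (F : CnfFormula) (X : Finset ℕ) (l : Lit) :
    (cnfHypergraph F X).degree l = litOcc F l :=
  rfl

section

variable {F : CnfFormula} {X : Finset ℕ}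

theorem cnfHypergraph_isUniform {k : ℕ} (hX : ∀ C ∈ F, ∀ l ∈ C, l.1 ∈ X)
    (hk : ∀ C ∈ F, C.card = k) : (cnfHypergraph F X).IsUniform k :=
  ⟨fun C hC l hl => mem_product.2 ⟨hX C hC l hl, mem_univ _⟩, hk⟩

theorem mem_of_card_inter_eq_one_of_notMem {S : Finset Lit} {x : ℕ} {b : Bool}
    (h : (S ∩ {x} ×ˢ univ).card = 1) (hb : (x, b) ∉ S) : (x, !b) ∈ S := by
  obtain ⟨⟨y, c⟩, hc⟩ := card_pos.1 (h ▸ one_pos)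
  obtain ⟨hcS, rfl, -⟩ := by simpa only [mem_inter, mem_product, mem_singleton] using hc
  cases b <;> cases c <;> simp_all

theorem cnfHypergraph_makerPairingWin {x₀ : ℕ} (hunsat : ¬ CnfSatisfiable F)
    (hX : ∀ C ∈ F, ∀ l ∈ C, l.1 ∈ X) (hx₀ : x₀ ∈ X) :
    (cnfHypergraph F X).MakerPairingWin := by
  set P : Finset (Finset Lit) := (X.erase x₀).image fun x => {x} ×ˢ univ
  have hP : P.sup id = (X.erase x₀) ×ˢ univ := by
    ext ⟨x, b⟩
    cases b <;> simp [P, mem_sup]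
  refine ⟨(x₀, true), by simp [cnfHypergraph, hx₀], P, fun p hp => ?_,
    fun p hp q hq hpq => ?_, ?_, fun S hS hone => ?_⟩
  · obtain ⟨x, hx, rfl⟩ := mem_image.1 hp
    obtain ⟨hxx₀, hxX⟩ := mem_erase.1 hx
    refine ⟨by simp, fun l hl => ?_⟩
    simp only [mem_product, mem_singleton] at hl
    simp [cnfHypergraph, Prod.ext_iff, hl.1, hxx₀, hxX]
  · obtain ⟨x, hx, rfl⟩ := mem_image.1 hp
    obtain ⟨y, hy, rfl⟩ := mem_image.1 hq
    exact disjoint_product.2 (Or.inl (disjoint_singleton.2 fun h => hpq (h ▸ rfl)))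
  · refine (card_le_card (t := {(x₀, false)}) fun l hl => ?_).trans_eq (card_singleton _)
    simp only [cnfHypergraph, hP, mem_sdiff, mem_erase, mem_product] at hl
    obtain ⟨x, b⟩ := l
    cases b <;> simp at hl ⊢ <;> tauto
  · let σ : ℕ → Bool := fun x => decide ((x, false) ∈ S)
    obtain ⟨C, hC, hfalse⟩ : ∃ C ∈ F, ∀ l ∈ C, σ l.1 ≠ l.2 := by
      by_contra! h
      exact hunsat ⟨σ, h⟩
    refine ⟨C, hC, fun ⟨x, b⟩ hl => ?_⟩
    have hσ : σ x ≠ b := hfalse _ hl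
    by_cases hx : x = x₀
    · subst hx
      have : (x, false) ∉ S := fun h => by simpa [hP] using hS h
      cases b <;> simp_all [σ]
    · have hpair := hone _ (mem_image_of_mem _ (mem_erase.2 ⟨hx, hX C hC _ hl⟩))
      refine mem_insert_of_mem ?_
      cases b
      · simpa [σ] using hσ
      · exact mem_of_card_inter_eq_one_of_notMem hpair (by simpa [σ] using hσ)

end

/-- If there is an unsatisfiable `(k,s)`-CNF formula, then there is a `(k,s)`-hypergraph:
a `k`-uniform hypergraph with maximum degree at most `s` on which Maker has a winning
pairing strategy. -/
theorem unsat_CNF_to_hypergraph (k s : ℕ) (F : CnfFormula) (hF : isKCNF F k)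
    (hvar : ∀ x : ℕ, varOcc F x ≤ s) (hunsat : ¬ CnfSatisfiable F) :
    ∃ H : FinHypergraph ℕ, H.IsUniform k ∧
      (∀ v : ℕ, H.degree v ≤ s) ∧
      H.MakerPairingWin := by
  -- `0` serves as Maker's opening variable, and must be a vertex even if `F` has no variables.
  set X := insert 0 (F.sup fun C => C.image Prod.fst)
  have hX : ∀ C ∈ F, ∀ l ∈ C, l.1 ∈ X := fun C hC l hl =>
    mem_insert_of_mem (mem_sup.2 ⟨C, hC, mem_image_of_mem _ hl⟩)
  let e : Lit ≃ ℕ := (Equiv.prodComm ℕ Bool).trans Equiv.boolProdNatEquivNat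
  refine ⟨(cnfHypergraph F X).map e.toEmbedding,
    (cnfHypergraph_isUniform hX fun C hC => (hF C hC).1).map _, fun v => ?_,
    (cnfHypergraph_makerPairingWin hunsat hX (mem_insert_self 0 _)).map _⟩
  rw [← e.apply_symm_apply v]
  calc ((cnfHypergraph F X).map e.toEmbedding).degree (e.toEmbedding (e.symm v))
      = litOcc F (e.symm v) := (FinHypergraph.degree_map _ _ _).trans (cnfHypergraph_degree F X _)
    _ ≤ s := (litOcc_le_varOcc F _).trans (hvar _)
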